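/- For any unit quaternion (η̃, q̃) with R̃ = I + 2S(q̃)² − 2η̃S(q̃), and any x ∈ R^3, one has (I − R̃) x = f2(x, η̃, q̃) q̃ where f2(x, η̃, q̃) = 2 (S(q̃) − η̃ I) S(x); moreover ‖f2(x, η̃, q̃)‖ ≤ 2‖x‖ in operator norm. -/

import Mathlib

/-!
Since `S(x) v = x × v`, both sides of the identity are iterated cross products:
`f₂(x, η, q) v = 2 (q × (x × v) - η (x × v))`, and anticommutativity `x × q = -(q × x)` turns
`f₂(x, η, q) q` into `(I - R) x = 2 (η (q × x) - q × (q × x))`.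
For the bound, `q × w ⊥ w` gives `‖q × w - η w‖² = (η² + ‖q‖²) ‖w‖² - (q ⬝ w)² ≤ ‖w‖²` for a unit
quaternion, and Lagrange's identity gives `‖x × v‖ ≤ ‖x‖ ‖v‖`.
-/

open Matrix

noncomputable section

/-- The skew-symmetric (cross-product) matrix `S(x)`, satisfying `S(x) y = x × y`. -/
def sk (x : Fin 3 → ℝ) : Matrix (Fin 3) (Fin 3) ℝ :=
  !![0, -x 2, x 1; x 2, 0, -x 0; -x 1, x 0, 0]

/-- The Euclidean norm of a vector in ℝ³. -/
def vnorm (x : Fin 3 → ℝ) : ℝ := Real.sqrt (x ⬝ᵥ x)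

/-- The operator (spectral) norm of a 3×3 real matrix. -/
def opNorm (M : Matrix (Fin 3) (Fin 3) ℝ) : ℝ :=
  ‖(Matrix.toEuclideanCLM (𝕜 := ℝ) M : EuclideanSpace ℝ (Fin 3) →L[ℝ] EuclideanSpace ℝ (Fin 3))‖

/-- The Rodrigues map `R(Q) = I + 2 S(q)² - 2 η S(q)`. -/
def rod (η : ℝ) (q : Fin 3 → ℝ) : Matrix (Fin 3) (Fin 3) ℝ :=
  1 + (2 : ℝ) • sk q ^ 2 - (2 * η) • sk q

/-- `f₂(x, η̃, q̃) = 2 (S(q̃) - η̃ I) S(x)`. -/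
def f2 (x : Fin 3 → ℝ) (η : ℝ) (q : Fin 3 → ℝ) : Matrix (Fin 3) (Fin 3) ℝ :=
  (2 : ℝ) • ((sk q - η • (1 : Matrix (Fin 3) (Fin 3) ℝ)) * sk x)

lemma sk_mulVec (x v : Fin 3 → ℝ) : sk x *ᵥ v = x ⨯₃ v := by
  ext i
  fin_cases i <;> simp [sk, cross_apply, mulVec, dotProduct, Fin.sum_univ_succ] <;> ring

lemma vnorm_sq (v : Fin 3 → ℝ) : vnorm v ^ 2 = v ⬝ᵥ v :=
  Real.sq_sqrt (dotProduct_self_star_nonneg v)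

lemma vnorm_nonneg (v : Fin 3 → ℝ) : 0 ≤ vnorm v :=
  Real.sqrt_nonneg _

lemma norm_toLp_eq_vnorm (v : Fin 3 → ℝ) : ‖WithLp.toLp 2 v‖ = vnorm v := by
  rw [norm_eq_sqrt_real_inner, EuclideanSpace.inner_eq_star_dotProduct, star_trivial]
  rfl

lemma vnorm_smul (c : ℝ) (v : Fin 3 → ℝ) : vnorm (c • v) = |c| * vnorm v := by
  rw [← norm_toLp_eq_vnorm, WithLp.toLp_smul, norm_smul, norm_toLp_eq_vnorm, Real.norm_eq_abs]

lemma opNorm_le_of_vnorm_mulVec_le {M : Matrix (Fin 3) (Fin 3) ℝ} {c : ℝ} (hc : 0 ≤ c)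
    (h : ∀ v, vnorm (M *ᵥ v) ≤ c * vnorm v) : opNorm M ≤ c :=
  ContinuousLinearMap.opNorm_le_bound _ hc fun v => by
    simpa only [← norm_toLp_eq_vnorm, WithLp.toLp_ofLp, ← toEuclideanCLM_toLp] using h v.ofLp

lemma vnorm_cross_le (x v : Fin 3 → ℝ) : vnorm (x ⨯₃ v) ≤ vnorm x * vnorm v := by
  refine le_of_sq_le_sq ?_ (mul_nonneg (vnorm_nonneg x) (vnorm_nonneg v))
  rw [mul_pow, vnorm_sq, vnorm_sq, vnorm_sq, cross_dot_cross, dotProduct_comm v x]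
  nlinarith [sq_nonneg (x ⬝ᵥ v)]

lemma vnorm_cross_sub_smul_sq (η : ℝ) (q w : Fin 3 → ℝ) :
    vnorm (q ⨯₃ w - η • w) ^ 2 = (η ^ 2 + vnorm q ^ 2) * vnorm w ^ 2 - (q ⬝ᵥ w) ^ 2 := by
  simp only [vnorm_sq, sub_dotProduct, dotProduct_sub, smul_dotProduct, dotProduct_smul,
    cross_dot_cross, dotProduct_comm (q ⨯₃ w) w, dot_cross_self, smul_eq_mul,
    dotProduct_comm w q]
  ring

lemma vnorm_cross_sub_smul_le {η : ℝ} {q : Fin 3 → ℝ} (h : η ^ 2 + vnorm q ^ 2 ≤ 1)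
    (w : Fin 3 → ℝ) : vnorm (q ⨯₃ w - η • w) ≤ vnorm w := by
  refine le_of_sq_le_sq ?_ (vnorm_nonneg w)
  rw [vnorm_cross_sub_smul_sq]
  nlinarith [sq_nonneg (q ⬝ᵥ w), sq_nonneg (vnorm w)]

lemma f2_mulVec (x : Fin 3 → ℝ) (η : ℝ) (q v : Fin 3 → ℝ) :
    f2 x η q *ᵥ v = (2 : ℝ) • (q ⨯₃ (x ⨯₃ v) - η • (x ⨯₃ v)) := by
  simp only [f2, smul_mulVec, ← mulVec_mulVec, sub_mulVec, smul_mulVec, one_mulVec, sk_mulVec]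

lemma one_sub_rod_mulVec (η : ℝ) (q x : Fin 3 → ℝ) :
    (1 - rod η q) *ᵥ x = (2 : ℝ) • (η • (q ⨯₃ x) - q ⨯₃ (q ⨯₃ x)) := by
  simp only [rod, sub_mulVec, add_mulVec, smul_mulVec, one_mulVec, sq, ← mulVec_mulVec, sk_mulVec]
  module

lemma one_sub_rod_mulVec_eq_f2_mulVec (η : ℝ) (q x : Fin 3 → ℝ) :
    (1 - rod η q) *ᵥ x = f2 x η q *ᵥ q := by
  rw [one_sub_rod_mulVec, f2_mulVec, ← cross_anticomm q x, map_neg, smul_neg]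
  module

lemma opNorm_f2_le {η : ℝ} {q : Fin 3 → ℝ} (h : η ^ 2 + vnorm q ^ 2 ≤ 1) (x : Fin 3 → ℝ) :
    opNorm (f2 x η q) ≤ 2 * vnorm x := by
  refine opNorm_le_of_vnorm_mulVec_le (mul_nonneg zero_le_two (vnorm_nonneg x)) fun v => ?_
  calc vnorm (f2 x η q *ᵥ v) = 2 * vnorm (q ⨯₃ (x ⨯₃ v) - η • (x ⨯₃ v)) := by
        rw [f2_mulVec, vnorm_smul, abs_two]
    _ ≤ 2 * vnorm (x ⨯₃ v) := by gcongr; exact vnorm_cross_sub_smul_le h _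
    _ ≤ 2 * vnorm x * vnorm v := by rw [mul_assoc]; gcongr; exact vnorm_cross_le x v

theorem f2_identity_and_bound (ηt : ℝ) (qt : Fin 3 → ℝ)
    (hQ : ηt ^ 2 + vnorm qt ^ 2 = 1) (x : Fin 3 → ℝ) :
    ((1 : Matrix (Fin 3) (Fin 3) ℝ) - rod ηt qt).mulVec x = (f2 x ηt qt).mulVec qt ∧
    opNorm (f2 x ηt qt) ≤ 2 * vnorm x :=
  ⟨one_sub_rod_mulVec_eq_f2_mulVec ηt qt x, opNorm_f2_le hQ.le x⟩

end
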